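/- arXiv:2411.03899 — 4 statements merged into one kernel-verified Lean document; each statement's English description precedes it below -/
import Mathlib

section
/- Let s, y ∈ ℝⁿ with sᵀy > 0. The function m ↦ αPBB(m) = [(2m−1)sᵀy + √((2m−1)²(sᵀy)² − 4m(m−1)(sᵀs)(yᵀy))] / (2m·sᵀs) is monotonically decreasing on (0, 1]. -/
open Matrix

private lemma key_sqrt (a b c u : ℝ) (ha : 0 < a) (hc : 0 < c) (hb : 0 < b)
    (hbac : b^2 ≤ a*c) (hu : u ≤ 1) :
    b * Real.sqrt (u^2*b^2 + 4*(1-u)*(a*c)) ≤ 2*(a*c) - u*b^2 := by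
  have hD : (0:ℝ) ≤ u^2*b^2 + 4*(1-u)*(a*c) := by nlinarith [sq_nonneg (u*b), mul_pos ha hc]
  have hs := Real.sqrt_nonneg (u^2*b^2 + 4*(1-u)*(a*c))
  have hsq := Real.sq_sqrt hD
  have hR : b^2 ≤ 2*(a*c) - u*b^2 := by nlinarith
  have hX2 : (b * Real.sqrt (u^2*b^2 + 4*(1-u)*(a*c)))^2 ≤ (2*(a*c) - u*b^2)^2 := by
    rw [mul_pow, hsq]
    nlinarith [mul_pos ha hc]
  exact le_of_pow_le_pow_left₀ two_ne_zero (by nlinarith) hX2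

private lemma key_mono (a b c u1 u2 : ℝ) (ha : 0 < a) (hc : 0 < c) (hb : 0 < b)
    (hbac : b^2 ≤ a*c) (h12 : u1 ≤ u2) (hu2 : u2 ≤ 1) :
    u2*b + Real.sqrt (u2^2*b^2 + 4*(1-u2)*(a*c)) ≤
      u1*b + Real.sqrt (u1^2*b^2 + 4*(1-u1)*(a*c)) := by
  have hu1 : u1 ≤ 1 := h12.trans hu2
  set r1 := Real.sqrt (u1^2*b^2 + 4*(1-u1)*(a*c)) with hr1
  have hD1 : (0:ℝ) ≤ u1^2*b^2 + 4*(1-u1)*(a*c) := by nlinarith [sq_nonneg (u1*b), mul_pos ha hc]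
  have hr1sq : r1^2 = u1^2*b^2 + 4*(1-u1)*(a*c) := Real.sq_sqrt hD1
  have hr1n : 0 ≤ r1 := Real.sqrt_nonneg _
  have hk := key_sqrt a b c u1 ha hc hb hbac hu1
  rw [← hr1] at hk
  -- lower bound on r1 : r1 ≥ (2-u1)*b
  have hlow : (2-u1)*b ≤ r1 := by
    rw [hr1]
    rw [show u1^2*b^2 + 4*(1-u1)*(a*c) = ((2-u1)*b)^2 + 4*(1-u1)*(a*c - b^2) by ring]
    have : ((2-u1)*b)^2 ≤ ((2-u1)*b)^2 + 4*(1-u1)*(a*c - b^2) := by nlinarith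
    calc (2-u1)*b = Real.sqrt (((2-u1)*b)^2) := by
          rw [Real.sqrt_sq (by nlinarith)]
      _ ≤ _ := Real.sqrt_le_sqrt this
  have hRnn : 0 ≤ r1 - (u2 - u1)*b := by nlinarith
  have hle : Real.sqrt (u2^2*b^2 + 4*(1-u2)*(a*c)) ≤ r1 - (u2 - u1)*b := by
    have h2 : u2^2*b^2 + 4*(1-u2)*(a*c) ≤ (r1 - (u2 - u1)*b)^2 := by
      have := mul_le_mul_of_nonneg_left hk (sub_nonneg.2 h12)
      nlinarith
    calc Real.sqrt (u2^2*b^2 + 4*(1-u2)*(a*c)) ≤ Real.sqrt ((r1 - (u2 - u1)*b)^2) :=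
          Real.sqrt_le_sqrt h2
      _ = r1 - (u2 - u1)*b := Real.sqrt_sq hRnn
  nlinarith

/-- `m ↦ αPBB(m)` is monotonically decreasing on `(0, 1]`. -/
theorem stmt_4 {n : ℕ} (s y : Fin n → ℝ) (hs : s ≠ 0) (hy : y ≠ 0)
    (hsy : 0 < s ⬝ᵥ y) :
    AntitoneOn (fun m : ℝ =>
      ((2*m - 1) * (s ⬝ᵥ y) +
        Real.sqrt ((2*m - 1)^2 * (s ⬝ᵥ y)^2 - 4*m*(m - 1) * (s ⬝ᵥ s) * (y ⬝ᵥ y))) /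
      (2*m * (s ⬝ᵥ s))) (Set.Ioc (0:ℝ) 1) := by
  have dps : ∀ (v : Fin n → ℝ), v ≠ 0 → 0 < v ⬝ᵥ v := by
    intro v hv
    have h0 : 0 ≤ v ⬝ᵥ v := Finset.sum_nonneg fun i _ => mul_self_nonneg _
    rcases h0.lt_or_eq with h | h
    · exact h
    · exact absurd (dotProduct_self_eq_zero.mp h.symm) hv
  set a := s ⬝ᵥ s with hadef
  set b := s ⬝ᵥ y with hbdef
  set c := y ⬝ᵥ y with hcdef
  have ha : 0 < a := dps s hs
  have hc : 0 < c := dps y hy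
  have hbac : b^2 ≤ a*c := by
    simpa [hadef, hbdef, hcdef, dotProduct, sq] using
      Finset.sum_mul_sq_le_sq_mul_sq Finset.univ s y
  -- rewrite the function in terms of u = 2 - 1/m
  have hform : ∀ m : ℝ, 0 < m →
      ((2*m - 1) * b + Real.sqrt ((2*m - 1)^2 * b^2 - 4*m*(m - 1) * a * c)) / (2*m * a)
        = ((2 - 1/m)*b + Real.sqrt ((2 - 1/m)^2*b^2 + 4*(1-(2 - 1/m))*(a*c))) / (2*a) := by
    intro m hm
    have hm0 : m ≠ 0 := hm.ne'
    have h1 : (2*m - 1)^2 * b^2 - 4*m*(m - 1) * a * c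
        = m^2 * ((2 - 1/m)^2*b^2 + 4*(1-(2 - 1/m))*(a*c)) := by
      field_simp
      ring
    rw [h1, Real.sqrt_mul (sq_nonneg m), Real.sqrt_sq hm.le]
    rw [show (2*m - 1) * b + m * Real.sqrt ((2 - 1/m)^2*b^2 + 4*(1-(2 - 1/m))*(a*c))
        = m * ((2 - 1/m)*b + Real.sqrt ((2 - 1/m)^2*b^2 + 4*(1-(2 - 1/m))*(a*c))) by
      field_simp]
    rw [show 2*m*a = m*(2*a) by ring, mul_div_mul_left _ _ hm0]
  intro m1 hm1 m2 hm2 h12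
  obtain ⟨hm1p, hm1le⟩ := hm1
  obtain ⟨hm2p, hm2le⟩ := hm2
  simp only
  rw [hform m1 hm1p, hform m2 hm2p]
  have hu12 : 2 - 1/m1 ≤ 2 - 1/m2 := by
    have : 1/m2 ≤ 1/m1 := one_div_le_one_div_of_le hm1p h12
    linarith
  have hu2 : 2 - 1/m2 ≤ 1 := by
    have : 1 ≤ 1/m2 := (le_div_iff₀ hm2p).mpr (by linarith)
    linarith
  apply div_le_div_of_nonneg_right _ (by positivity)
  exact key_mono a b c _ _ ha hc hsy hbac hu12 hu2
end

section
/- Let A ∈ ℝⁿˣⁿ be symmetric positive definite, let s ∈ ℝⁿ be nonzero and set y = As. Then for every m ∈ (0,1], αPBB(m) = [(2m−1)sᵀy + √((2m−1)²(sᵀy)² − 4m(m−1)(sᵀs)(yᵀy))] / (2m·sᵀs) satisfies αPBB(m) ≥ (sᵀAs)/(sᵀs), i.e. αPBB is bounded below by the Rayleigh quotient of s with respect to A. -/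
/-! Since `0 < m ≤ 1`, Cauchy–Schwarz `(sᵀy)² ≤ (sᵀs)(yᵀy)` makes the discriminant at least
`(sᵀy)²`, so the numerator of `αPBB(m)` is at least `(2m - 1)sᵀy + sᵀy = 2m·sᵀy`. -/

open Matrix

theorem dotProduct_sq_le {ι R : Type*} [Fintype ι] [CommSemiring R] [LinearOrder R]
    [IsStrictOrderedRing R] [ExistsAddOfLE R] (x y : ι → R) :
    (x ⬝ᵥ y) ^ 2 ≤ (x ⬝ᵥ x) * (y ⬝ᵥ y) := by
  simpa only [dotProduct, sq] using Finset.sum_mul_sq_le_sq_mul_sq Finset.univ x y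

/-- The step size `αPBB(m)` written in terms of `sy = sᵀy`, `ss = sᵀs` and `yy = yᵀy`. -/
noncomputable def pbbStepSize (m sy ss yy : ℝ) : ℝ :=
  ((2*m - 1) * sy + Real.sqrt ((2*m - 1)^2 * sy^2 - 4*m*(m - 1) * ss * yy)) / (2*m * ss)

lemma sq_le_pbbDiscriminant {m sy ss yy : ℝ} (hm0 : 0 ≤ m) (hm1 : m ≤ 1)
    (hCS : sy ^ 2 ≤ ss * yy) :
    sy ^ 2 ≤ (2*m - 1)^2 * sy^2 - 4*m*(m - 1) * ss * yy := by
  have hgap : 0 ≤ 4 * m * (1 - m) * (ss * yy - sy ^ 2) := by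
    have : 0 ≤ 1 - m := sub_nonneg.mpr hm1
    have : 0 ≤ ss * yy - sy ^ 2 := sub_nonneg.mpr hCS
    positivity
  linarith [show (2*m - 1)^2 * sy^2 - 4*m*(m - 1) * ss * yy - sy ^ 2
      = 4 * m * (1 - m) * (ss * yy - sy ^ 2) by ring]

lemma div_le_pbbStepSize {m sy ss yy : ℝ} (hm0 : 0 < m) (hm1 : m ≤ 1) (hss : 0 ≤ ss)
    (hCS : sy ^ 2 ≤ ss * yy) : sy / ss ≤ pbbStepSize m sy ss yy := by
  have hsqrt : sy ≤ Real.sqrt ((2*m - 1)^2 * sy^2 - 4*m*(m - 1) * ss * yy) :=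
    (le_abs_self sy).trans (Real.abs_le_sqrt (sq_le_pbbDiscriminant hm0.le hm1 hCS))
  calc sy / ss = 2 * m * sy / (2 * m * ss) := (mul_div_mul_left _ _ (by positivity)).symm
    _ ≤ pbbStepSize m sy ss yy := by
      unfold pbbStepSize
      gcongr
      linarith

theorem stmt_6_general {n : ℕ} (A : Matrix (Fin n) (Fin n) ℝ)
    (s : Fin n → ℝ) (y : Fin n → ℝ) (hy : y = A.mulVec s)
    (m : ℝ) (hm0 : 0 < m) (hm1 : m ≤ 1) :
    (s ⬝ᵥ A.mulVec s) / (s ⬝ᵥ s) ≤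
      ((2*m - 1) * (s ⬝ᵥ y) +
        Real.sqrt ((2*m - 1)^2 * (s ⬝ᵥ y)^2 - 4*m*(m - 1) * (s ⬝ᵥ s) * (y ⬝ᵥ y))) /
      (2*m * (s ⬝ᵥ s)) := by
  subst hy
  exact div_le_pbbStepSize hm0 hm1 (dotProduct_self_star_nonneg s) (dotProduct_sq_le s _)

/-- For `y = As` with `A` SPD, `αPBB(m)` is bounded below by the Rayleigh quotient. -/
theorem stmt_6 {n : ℕ} (A : Matrix (Fin n) (Fin n) ℝ)
    (hsymm : A.IsSymm) (hpd : A.PosDef)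
    (s : Fin n → ℝ) (hs : s ≠ 0) (y : Fin n → ℝ) (hy : y = A.mulVec s)
    (m : ℝ) (hm0 : 0 < m) (hm1 : m ≤ 1) :
    (s ⬝ᵥ A.mulVec s) / (s ⬝ᵥ s) ≤
      ((2*m - 1) * (s ⬝ᵥ y) +
        Real.sqrt ((2*m - 1)^2 * (s ⬝ᵥ y)^2 - 4*m*(m - 1) * (s ⬝ᵥ s) * (y ⬝ᵥ y))) /
      (2*m * (s ⬝ᵥ s)) :=
  stmt_6_general A s y hy m hm0 hm1
end

section
/- Let λ > 1, ε > 0, and m ∈ (0, 1]. Then the quantity D(ε) = (2m−1)(λε+1) + √((λε+1)² + 4m(1−m)(λ−1)²ε) − 2m(ε+1) is strictly positive. -/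
/-- The denominator of the amplification factor `e(ε)` is strictly positive. -/
theorem stmt_13 (lam ε m : ℝ) (hlam : 1 < lam) (hε : 0 < ε)
    (hm0 : 0 < m) (hm1 : m ≤ 1) :
    0 < (2*m - 1)*(lam*ε + 1) +
      Real.sqrt ((lam*ε + 1)^2 + 4*m*(1 - m)*(lam - 1)^2*ε) - 2*m*(ε + 1) := by
  set R : ℝ := 2*m*(ε + 1) - (2*m - 1)*(lam*ε + 1) with hR
  set S : ℝ := (lam*ε + 1)^2 + 4*m*(1 - m)*(lam - 1)^2*ε with hS
  have hRS : R^2 < S := by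
    have key : S - R^2 = 4*m*(lam-1)*ε * ((1-m)*(lam-1) + (lam*ε+1) - m*ε*(lam-1)) := by
      rw [hR, hS]; ring
    have h1 : 0 < (1-m)*(lam-1) + (lam*ε+1) - m*ε*(lam-1) := by
      nlinarith [mul_nonneg (by linarith : (0:ℝ) ≤ 1-m) (by linarith : (0:ℝ) ≤ lam-1),
        mul_pos hε (show (0:ℝ) < lam - m*(lam-1) by
          nlinarith [mul_nonneg (by linarith : (0:ℝ) ≤ 1-m) (by linarith : (0:ℝ) ≤ lam-1)])]
    nlinarith [mul_pos (mul_pos (mul_pos (by linarith : (0:ℝ) < 4*m) (by linarith : (0:ℝ) < lam-1)) hε) h1]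
  have h2 := Real.sqrt_lt_sqrt (sq_nonneg R) hRS
  rw [Real.sqrt_sq_eq_abs] at h2
  have h3 := le_abs_self R
  have : R < Real.sqrt S := lt_of_le_of_lt h3 h2
  linarith
end

section
/- Let λ > 1, ε > 0, and m ∈ (0,1]. Then the numerator N(ε) = (2m−1)(λε+1) + √((λε+1)² + 4m(1−m)(λ−1)²ε) − 2mλ(ε+1) is nonpositive; consequently the amplification factor e(ε) = N(ε)/D(ε) satisfies e(ε) ≤ 0, where D(ε) = (2m−1)(λε+1) + √((λε+1)² + 4m(1−m)(λ−1)²ε) − 2m(ε+1) > 0. -/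
/-- The numerator of the amplification factor is nonpositive, hence `e(ε) ≤ 0`. -/
theorem stmt_14 (lam ε m : ℝ) (hlam : 1 < lam) (hε : 0 < ε)
    (hm0 : 0 < m) (hm1 : m ≤ 1) :
    ((2*m - 1)*(lam*ε + 1) +
      Real.sqrt ((lam*ε + 1)^2 + 4*m*(1 - m)*(lam - 1)^2*ε) - 2*m*lam*(ε + 1) ≤ 0) ∧
    ((2*m - 1)*(lam*ε + 1) +
        Real.sqrt ((lam*ε + 1)^2 + 4*m*(1 - m)*(lam - 1)^2*ε) - 2*m*lam*(ε + 1)) /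
      ((2*m - 1)*(lam*ε + 1) +
        Real.sqrt ((lam*ε + 1)^2 + 4*m*(1 - m)*(lam - 1)^2*ε) - 2*m*(ε + 1)) ≤ 0 := by
  set A : ℝ := (lam*ε + 1)^2 + 4*m*(1 - m)*(lam - 1)^2*ε with hA
  have hb : (0:ℝ) ≤ 2*m*(lam-1) + lam*ε + 1 := by nlinarith [mul_nonneg hm0.le (by linarith : (0:ℝ) ≤ lam-1)]
  have hbr : (0:ℝ) ≤ m*(lam-1)*(1+ε) + ε + 1 := by
    nlinarith [mul_nonneg (mul_nonneg hm0.le (by linarith : (0:ℝ) ≤ lam-1)) (by linarith : (0:ℝ) ≤ 1+ε)]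
  have key : (0:ℝ) ≤ 4*m*(lam-1)*(m*(lam-1)*(1+ε) + ε + 1) := by
    apply mul_nonneg _ hbr
    nlinarith [mul_nonneg hm0.le (by linarith : (0:ℝ) ≤ lam-1)]
  have h1 : A ≤ (2*m*(lam-1) + lam*ε + 1)^2 := by rw [hA]; nlinarith [key]
  have hsu : Real.sqrt A ≤ 2*m*(lam-1) + lam*ε + 1 := by
    calc Real.sqrt A ≤ Real.sqrt ((2*m*(lam-1) + lam*ε + 1)^2) := Real.sqrt_le_sqrt h1
    _ = 2*m*(lam-1) + lam*ε + 1 := Real.sqrt_sq hb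
  have hsl : lam*ε + 1 ≤ Real.sqrt A := by
    have h2 : (lam*ε + 1)^2 ≤ A := by
      rw [hA]
      nlinarith [mul_nonneg (mul_nonneg (mul_nonneg (by linarith : (0:ℝ) ≤ 4*m) (by linarith : (0:ℝ) ≤ 1-m)) (sq_nonneg (lam-1))) hε.le]
    calc lam*ε + 1 = Real.sqrt ((lam*ε+1)^2) := (Real.sqrt_sq (by nlinarith [mul_pos (by linarith : (0:ℝ) < lam) hε])).symm
    _ ≤ Real.sqrt A := Real.sqrt_le_sqrt h2
  have hN : (2*m - 1)*(lam*ε + 1) + Real.sqrt A - 2*m*lam*(ε + 1) ≤ 0 := by nlinarith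
  have hD : 0 < (2*m - 1)*(lam*ε + 1) + Real.sqrt A - 2*m*(ε + 1) := by
    nlinarith [mul_pos hm0 (mul_pos (by linarith : (0:ℝ) < lam-1) hε)]
  exact ⟨hN, div_nonpos_of_nonpos_of_nonneg hN hD.le⟩
end
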